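/- Let m ≥ 2 be an even integer and n ≥ 1. Let g, h ∈ ℝ with h ≠ 0 and g/h not an integer, and let A be the Cauchy–Hankel tensor of order m and dimension n determined by g and h. Then A is positive definite if and only if g + m·h > 0 and g + n·m·h > 0. -/

import Mathlib

/-!
Since `1 / s = ∫₀¹ t ^ (s - 1) dt`, splitting `g + h (i₁ + ⋯ + iₘ) = ∑ⱼ c (iⱼ)` with
`c k = g / m + h k` writes each entry as `∫₀¹ ∏ⱼ t ^ (c (iⱼ) - 1 / m) dt`, hence
`A x^m = ∫₀¹ (∑ₖ xₖ t ^ (c k - 1 / m))^m dt`, provided all `c k > 0`. For even `m` this is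
positive: the integrand is `(t ^ a · P (t ^ h)) ^ m` with `P = ∑ₖ xₖ X ^ (k - 1)` a nonzero
polynomial, so it does not vanish identically. Conversely `A e_k^m = 1 / (g + m h k)` must be
positive, and since `k ↦ g + m h k` is affine this holds for all `k ∈ [1, n]` iff it holds at
`k = 1` and `k = n`.
-/

open Finset

/-- `A x^m = ∑_{i_1,…,i_m} a_{i_1⋯i_m} x_{i_1}⋯x_{i_m}` for an order `m` dimension `n` tensor. -/
noncomputable def tApply (m n : ℕ) (a : (Fin m → Fin n) → ℝ) (x : Fin n → ℝ) : ℝ :=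
  ∑ i : Fin m → Fin n, a i * ∏ j, x (i j)

/-- An (even order) tensor is positive semi-definite if `A x^m ≥ 0` for all `x`. -/
def IsPSD (m n : ℕ) (a : (Fin m → Fin n) → ℝ) : Prop :=
  ∀ x : Fin n → ℝ, 0 ≤ tApply m n a x

/-- An (even order) tensor is positive definite if `A x^m > 0` for all nonzero `x`. -/
def IsPD (m n : ℕ) (a : (Fin m → Fin n) → ℝ) : Prop :=
  ∀ x : Fin n → ℝ, x ≠ 0 → 0 < tApply m n a x

/-- The Cauchy–Hankel tensor determined by `g, h`: entries
`1 / (g + h(i_1 + ⋯ + i_m))` for 1-based indices `i_j ∈ [n]`. -/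
noncomputable def cauchyHankel (m n : ℕ) (g h : ℝ) : (Fin m → Fin n) → ℝ :=
  fun i => 1 / (g + h * ∑ j, (((i j : ℕ) : ℝ) + 1))

open MeasureTheory Filter Topology Polynomial

theorem tApply_single {m n : ℕ} (a : (Fin m → Fin n) → ℝ) (k : Fin n) :
    tApply m n a (Pi.single k 1) = a fun _ => k := by
  unfold tApply
  rw [sum_eq_single (fun _ => k)]
  · simp
  · intro i _ hi
    obtain ⟨j, hj⟩ : ∃ j, i j ≠ k := by
      by_contra! h
      exact hi (funext h)
    rw [prod_eq_zero (mem_univ j) (Pi.single_eq_of_ne hj 1), mul_zero]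
  · simp

theorem IsPD.diag_pos {m n : ℕ} {a : (Fin m → Fin n) → ℝ} (ha : IsPD m n a) (k : Fin n) :
    0 < a fun _ => k := by
  simpa [tApply_single] using ha (Pi.single k 1) (by simp)

section MomentTensor

variable {α : Type*} [MeasurableSpace α] {μ : Measure α} {m n : ℕ} {φ : Fin n → α → ℝ}

theorem integrable_sum_mul_pow (hφ : ∀ i : Fin m → Fin n, Integrable (fun t => ∏ j, φ (i j) t) μ)
    (x : Fin n → ℝ) : Integrable (fun t => (∑ k, x k * φ k t) ^ m) μ := by
  simp_rw [Fintype.sum_pow, prod_mul_distrib]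
  exact integrable_finsetSum _ fun i _ => (hφ i).const_mul _

theorem tApply_integral_prod (hφ : ∀ i : Fin m → Fin n, Integrable (fun t => ∏ j, φ (i j) t) μ)
    (x : Fin n → ℝ) :
    tApply m n (fun i => ∫ t, ∏ j, φ (i j) t ∂μ) x = ∫ t, (∑ k, x k * φ k t) ^ m ∂μ := by
  simp_rw [Fintype.sum_pow, prod_mul_distrib]
  rw [integral_finsetSum _ fun i _ => (hφ i).const_mul _]
  refine sum_congr rfl fun i _ => ?_
  rw [integral_const_mul, mul_comm]

end MomentTensor

theorem prod_rpow_sub_inv_eqOn {m : ℕ} {u : Fin m → ℝ} (hu : 0 < ∑ j, u j) :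
    Set.EqOn (fun t => ∏ j, t ^ (u j - 1 / m)) (fun t => t ^ (∑ j, u j - 1))
      (Set.Ioi (0 : ℝ)) := by
  have hm : (m : ℝ) ≠ 0 := Nat.cast_ne_zero.2 <| by
    rintro rfl
    simp at hu
  intro t ht
  dsimp only
  rw [← Real.rpow_sum_of_pos ht, sum_sub_distrib, sum_const, card_univ, Fintype.card_fin,
    nsmul_eq_mul, mul_one_div_cancel hm]

theorem integrableOn_prod_rpow_sub_inv {m : ℕ} {u : Fin m → ℝ} (hu : 0 < ∑ j, u j) :
    IntegrableOn (fun t => ∏ j, t ^ (u j - 1 / m)) (Set.Ioc (0 : ℝ) 1) :=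
  (intervalIntegral.intervalIntegrable_rpow' (by linarith)).1.congr_fun
    (fun _ ht => (prod_rpow_sub_inv_eqOn hu ht.1).symm) measurableSet_Ioc

theorem integral_prod_rpow_sub_inv {m : ℕ} {u : Fin m → ℝ} (hu : 0 < ∑ j, u j) :
    ∫ t in Set.Ioc (0 : ℝ) 1, ∏ j, t ^ (u j - 1 / m) = 1 / ∑ j, u j := by
  rw [setIntegral_congr_fun measurableSet_Ioc fun _ ht => prod_rpow_sub_inv_eqOn hu ht.1,
    ← intervalIntegral.integral_of_le zero_le_one, integral_rpow (Or.inl (by linarith))]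
  simp [hu.ne']

theorem exists_sum_mul_pow_ne_zero {R : Type*} [CommRing R] [IsDomain R] {n : ℕ} {x : Fin n → R}
    (hx : x ≠ 0) {s : Set R} (hs : s.Infinite) : ∃ u ∈ s, ∑ k, x k * u ^ (k : ℕ) ≠ 0 := by
  set p := (degreeLTEquiv R n).symm x
  have hp : (p : R[X]) ≠ 0 := by simpa [p] using hx
  by_contra! h
  refine hp (eq_zero_of_infinite_isRoot _ (hs.mono fun u hu => ?_))
  simp [IsRoot, eval_eq_sum_degreeLTEquiv p.2, p, h u hu]

theorem exists_sum_mul_rpow_ne_zero {n : ℕ} {x : Fin n → ℝ} (hx : x ≠ 0) (a : ℝ) {h : ℝ}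
    (hh : h ≠ 0) : ∃ t ∈ Set.Ioo (0 : ℝ) 1, ∑ k, x k * t ^ (a + h * k) ≠ 0 := by
  have hinj : Set.InjOn (fun t : ℝ => t ^ h) (Set.Ioo 0 1) :=
    (Real.rpow_left_injOn hh).mono fun t ht => ht.1.le
  obtain ⟨_, ⟨t, ht, rfl⟩, hne⟩ :=
    exists_sum_mul_pow_ne_zero hx ((Set.Ioo_infinite zero_lt_one).image hinj)
  refine ⟨t, ht, ?_⟩
  have hsplit : ∀ k : Fin n, t ^ (a + h * k) = t ^ a * (t ^ h) ^ (k : ℕ) := fun k => by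
    rw [Real.rpow_add ht.1, ← Real.rpow_natCast, ← Real.rpow_mul ht.1.le]
  simp_rw [hsplit, mul_left_comm _ (t ^ a), ← mul_sum]
  exact mul_ne_zero (Real.rpow_pos_of_pos ht.1 a).ne' hne

theorem setIntegral_pos_of_continuousAt {X : Type*} [TopologicalSpace X] [MeasurableSpace X]
    {μ : Measure X} [μ.IsOpenPosMeasure] {f : X → ℝ} {s : Set X} {x : X}
    (hfi : IntegrableOn f s μ) (hf : 0 ≤ f) (hs : s ∈ 𝓝 x) (hfx : ContinuousAt f x)
    (hne : f x ≠ 0) : 0 < ∫ y in s, f y ∂μ := by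
  rw [setIntegral_pos_iff_support_of_nonneg_ae (ae_of_all _ hf) hfi]
  exact μ.measure_pos_of_mem_nhds (inter_mem (hfx.eventually_ne hne) hs)

theorem cauchyHankel_diag (m n : ℕ) (g h : ℝ) (k : Fin n) :
    cauchyHankel m n g h (fun _ => k) = 1 / (g + m * h * ((k : ℕ) + 1)) := by
  simp only [cauchyHankel, sum_const, card_univ, Fintype.card_fin, nsmul_eq_mul]
  ring_nf

theorem cauchyHankel_eq_one_div_sum {m n : ℕ} (hm : m ≠ 0) (g h : ℝ) (i : Fin m → Fin n) :
    cauchyHankel m n g h i = 1 / ∑ j, (g / m + h * ((i j : ℕ) + 1)) := by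
  rw [sum_add_distrib, sum_const, card_univ, Fintype.card_fin, nsmul_eq_mul,
    mul_div_cancel₀ _ (Nat.cast_ne_zero.2 hm), ← mul_sum]
  rfl

theorem cauchyHankel_isPD_iff {m n : ℕ} (hm : m ≠ 0) (hme : Even m) {g h : ℝ} (hh : h ≠ 0) :
    IsPD m n (cauchyHankel m n g h) ↔ ∀ k : Fin n, 0 < g + m * h * ((k : ℕ) + 1) := by
  refine ⟨fun hpd k => one_div_pos.1 (cauchyHankel_diag m n g h k ▸ hpd.diag_pos k),
    fun hpos x hx => ?_⟩
  set c : Fin n → ℝ := fun k => g / m + h * ((k : ℕ) + 1)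
  have hc : ∀ k, 0 < c k := fun k => by
    have : c k = (g + m * h * ((k : ℕ) + 1)) / m := by simp only [c]; field_simp
    rw [this]
    exact div_pos (hpos k) (by positivity)
  have hsum : ∀ i : Fin m → Fin n, 0 < ∑ j, c (i j) := fun i =>
    sum_pos (fun j _ => hc _) (univ_nonempty_iff.2 ⟨⟨0, Nat.pos_of_ne_zero hm⟩⟩)
  have hint := fun i => integrableOn_prod_rpow_sub_inv (hsum i)
  have hrepr : cauchyHankel m n g h
      = fun i => ∫ t in Set.Ioc (0 : ℝ) 1, ∏ j, t ^ (c (i j) - 1 / m) := by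
    funext i
    rw [integral_prod_rpow_sub_inv (hsum i)]
    exact cauchyHankel_eq_one_div_sum hm g h i
  rw [hrepr, tApply_integral_prod (φ := fun k t => t ^ (c k - 1 / m)) hint]
  obtain ⟨t, ht, hne⟩ := exists_sum_mul_rpow_ne_zero hx (g / m + h - 1 / m) hh
  refine setIntegral_pos_of_continuousAt (integrable_sum_mul_pow hint x)
    (fun t => hme.pow_nonneg _) (Ioc_mem_nhds ht.1 ht.2) ?_ (pow_ne_zero _ ?_)
  · fun_prop (disch := exact Or.inl ht.1.ne')
  · convert hne using 4 with k
    simp only [c]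
    ring

theorem forall_fin_add_mul_pos_iff {n : ℕ} (hn : 1 ≤ n) {p q : ℝ} :
    (∀ k : Fin n, 0 < p + q * ((k : ℕ) + 1)) ↔ 0 < p + q ∧ 0 < p + n * q := by
  constructor
  · intro h
    refine ⟨by simpa using h ⟨0, hn⟩, ?_⟩
    simpa [Nat.cast_pred hn, mul_comm] using h ⟨n - 1, by omega⟩
  · rintro ⟨h1, hN⟩ k
    have hk : ((k : ℕ) : ℝ) + 1 ≤ n := by exact_mod_cast k.isLt
    have hk0 : (0 : ℝ) ≤ k := k.val.cast_nonneg
    rcases le_total 0 q with hq | hq <;> nlinarith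

theorem stmt_15_general (m n : ℕ) (hm : 2 ≤ m) (hme : Even m) (hn : 1 ≤ n)
    (g h : ℝ) (hh : h ≠ 0) :
    IsPD m n (cauchyHankel m n g h)
      ↔ 0 < g + (m : ℝ) * h ∧ 0 < g + (n : ℝ) * (m : ℝ) * h := by
  rw [cauchyHankel_isPD_iff (by omega) hme hh, forall_fin_add_mul_pos_iff hn, mul_assoc]

/-- Theorem 5.1: an even order Cauchy–Hankel tensor is positive definite iff
`g + mh > 0` and `g + nmh > 0`. -/
theorem stmt_15 (m n : ℕ) (hm : 2 ≤ m) (hme : Even m) (hn : 1 ≤ n)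
    (g h : ℝ) (hh : h ≠ 0) (hgh : ∀ z : ℤ, g / h ≠ (z : ℝ)) :
    IsPD m n (cauchyHankel m n g h)
      ↔ 0 < g + (m : ℝ) * h ∧ 0 < g + (n : ℝ) * (m : ℝ) * h :=
  stmt_15_general m n hm hme hn g h hh
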